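/- arXiv:1702.03599 — 2 statements merged into one kernel-verified Lean document; each statement's English description precedes it below -/
import Mathlib

section
/- Let f be a piecewise contracting map, x ∈ X̃ with itinerary θ. For n ≥ 1 and 1 ≤ k ≤ N let L_n^k(θ) be the set of words i₁…i_n ∈ L_n(θ) such that exactly k distinct indices j satisfy: there exists t ≥ 0 with f^{t+n}(x) ∈ A_{i₁…i_n} ∩ X_j. Then p(θ, n+1) ≤ p(θ, n) + Σ_{k=2}^{N} (k−1)·#L_n^k(θ), and equality holds if f satisfies the separation property. -/
open Set

/-- The atom of a word `w = [i₁, …, iₙ]`: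
`A_{i₁…iₙ} = F_{iₙ} ∘ ⋯ ∘ F_{i₁}(X)` where `F_i(A) = closure (f '' (A ∩ P i))`. -/
def pcAtom {X : Type*} [MetricSpace X] (f : X → X) {N : ℕ} (P : Fin N → Set X)
    (w : List (Fin N)) : Set X :=
  w.foldl (fun A i => closure (f '' (A ∩ P i))) Set.univ

/-- The discontinuity set `Δ`: points lying in the closures of two different pieces. -/
def pcDelta {X : Type*} [MetricSpace X] {N : ℕ} (P : Fin N → Set X) : Set X :=
  {y | ∃ i j : Fin N, i ≠ j ∧ y ∈ closure (P i) ∧ y ∈ closure (P j)}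

/-- The word `θ_t θ_{t+1} … θ_{t+n-1}`. -/
def itinWord {N : ℕ} (θ : ℕ → Fin N) (t n : ℕ) : List (Fin N) :=
  (List.range n).map fun k => θ (t + k)

/-- The set of factors (subwords) of length `n` of the sequence `θ`. -/
def seqFactors {N : ℕ} (θ : ℕ → Fin N) (n : ℕ) : Set (List (Fin N)) :=
  {w | ∃ t : ℕ, w = itinWord θ t n}

/-- The complexity function `p(θ, n)`. -/
noncomputable def seqComplexity {N : ℕ} (θ : ℕ → Fin N) (n : ℕ) : ℕ :=
  (seqFactors θ n).ncard

/-- `L_n^k(θ)`: words `w` of length `n` of `θ` such that exactly `k` indices `j` satisfy: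
the orbit of `f^n(x)` visits `A_w ∩ X_j`. -/
def LkSet {X : Type*} [MetricSpace X] (f : X → X) {N : ℕ} (P : Fin N → Set X)
    (θ : ℕ → Fin N) (x : X) (n k : ℕ) : Set (List (Fin N)) :=
  {w | w ∈ seqFactors θ n ∧
    ({j : Fin N | ∃ t : ℕ, f^[t + n] x ∈ pcAtom f P w ∩ P j}).ncard = k}

lemma itinWord_length {N : ℕ} (θ : ℕ → Fin N) (t n : ℕ) : (itinWord θ t n).length = n := by
  simp [itinWord]

lemma itinWord_succ {N : ℕ} (θ : ℕ → Fin N) (t n : ℕ) :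
    itinWord θ t (n+1) = itinWord θ t n ++ [θ (t+n)] := by
  simp [itinWord, List.range_succ]

lemma pcAtom_append {X : Type*} [MetricSpace X] (f : X → X) {N : ℕ} (P : Fin N → Set X)
    (w : List (Fin N)) (i : Fin N) :
    pcAtom f P (w ++ [i]) = closure (f '' (pcAtom f P w ∩ P i)) := by
  simp [pcAtom, List.foldl_append]

lemma pcAtom_closed {X : Type*} [MetricSpace X] (f : X → X) {N : ℕ} (P : Fin N → Set X)
    (w : List (Fin N)) : IsClosed (pcAtom f P w) := by
  rcases List.eq_nil_or_concat w with h | ⟨w', i, h⟩ <;> subst h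
  · exact isClosed_univ
  · rw [List.concat_eq_append, pcAtom_append]; exact isClosed_closure

lemma orbit_mem_atom {X : Type*} [MetricSpace X] (f : X → X) {N : ℕ} (P : Fin N → Set X)
    (x : X) (θ : ℕ → Fin N) (hθ : ∀ t : ℕ, f^[t] x ∈ P (θ t)) (t : ℕ) :
    ∀ n : ℕ, f^[t + n] x ∈ pcAtom f P (itinWord θ t n) := by
  intro n
  induction n with
  | zero => simp [itinWord, pcAtom]
  | succ n ih =>
    rw [itinWord_succ, pcAtom_append, ← Nat.add_assoc, Function.iterate_succ_apply']
    exact subset_closure ⟨f^[t+n] x, ⟨ih, hθ (t+n)⟩, rfl⟩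

lemma seqFactors_finite {N : ℕ} (θ : ℕ → Fin N) (n : ℕ) :
    (seqFactors θ n).Finite := by
  apply Set.Finite.subset (List.finite_length_eq (α := Fin N) n)
  rintro w ⟨t, rfl⟩
  exact itinWord_length θ t n

lemma sep_itin {X : Type*} [MetricSpace X] [CompactSpace X] {N : ℕ} (P : Fin N → Set X)
    (f : X → X) (g : Fin N → X → X)
    (hg : ∀ i, ContinuousOn (g i) (closure (P i)) ∧ Set.EqOn (g i) f (P i) ∧
        Set.InjOn (g i) (closure (P i)) ∧
        ∀ j, j ≠ i → Disjoint (g i '' closure (P i)) (g j '' closure (P j)))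
    (x : X) (θ : ℕ → Fin N) (hθ : ∀ t : ℕ, f^[t] x ∈ P (θ t)) :
    ∀ (n t : ℕ) (u : List (Fin N)), u.length = n → f^[t + n] x ∈ pcAtom f P u →
      u = itinWord θ t n := by
  intro n
  induction n with
  | zero =>
    intro t u hu _
    simpa [itinWord] using List.length_eq_zero_iff.mp hu
  | succ n ih =>
    intro t u hu hmem
    rcases List.eq_nil_or_concat u with rfl | ⟨u', i, rfl⟩
    · simp at hu
    rw [List.concat_eq_append] at *
    rw [pcAtom_append] at hmem
    -- atom subset lemma
    have hQ : IsClosed (pcAtom f P u') := pcAtom_closed f P u'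
    have hT : pcAtom f P (u' ++ [i]) ⊆ g i '' (pcAtom f P u' ∩ closure (P i)) := by
      rw [pcAtom_append]
      have hcl : IsClosed (pcAtom f P u' ∩ closure (P i)) := hQ.inter isClosed_closure
      have hcomp : IsCompact (g i '' (pcAtom f P u' ∩ closure (P i))) :=
        (hcl.isCompact).image_of_continuousOn ((hg i).1.mono (Set.inter_subset_right))
      apply closure_minimal _ hcomp.isClosed
      rintro z ⟨a, ⟨haQ, haP⟩, rfl⟩
      exact ⟨a, ⟨haQ, subset_closure haP⟩, (hg i).2.1 haP⟩
    have hz : f^[t + (n+1)] x ∈ g i '' (pcAtom f P u' ∩ closure (P i)) := by rw [pcAtom_append] at hT; exact hT hmem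
    have hy : f^[t + n] x ∈ P (θ (t + n)) := hθ (t + n)
    have hzy : f^[t + (n+1)] x = f (f^[t+n] x) := by
      rw [← Nat.add_assoc, Function.iterate_succ_apply']
    have hieq : i = θ (t + n) := by
      by_contra hne
      have h1 : f^[t + (n+1)] x ∈ g i '' closure (P i) :=
        Set.image_mono (Set.inter_subset_right) hz
      have h2 : f^[t + (n+1)] x ∈ g (θ (t+n)) '' closure (P (θ (t+n))) := by
        rw [hzy, ← (hg (θ (t+n))).2.1 hy]
        exact ⟨_, subset_closure hy, rfl⟩
      exact Set.disjoint_left.mp ((hg i).2.2.2 _ (fun h => hne h.symm)) h1 h2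
    subst hieq
    obtain ⟨a, ⟨haQ, haP⟩, hga⟩ := hz
    have hay : a = f^[t+n] x := by
      apply (hg (θ (t+n))).2.2.1 haP (subset_closure hy)
      rw [hga, hzy, ← (hg (θ (t+n))).2.1 hy]
    rw [hay] at haQ
    have hlen : u'.length = n := by simpa using hu
    rw [ih t u' hlen haQ, ← itinWord_succ]

def extSet {N : ℕ} (θ : ℕ → Fin N) (n : ℕ) (u : List (Fin N)) : Set (Fin N) :=
  {j | ∃ t : ℕ, itinWord θ t n = u ∧ θ (t + n) = j}

lemma complexity_succ {N : ℕ} (θ : ℕ → Fin N) (n : ℕ) :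
    seqComplexity θ (n + 1) =
      ∑ u ∈ (seqFactors_finite θ n).toFinset, (extSet θ n u).ncard := by
  classical
  set A' := (seqFactors_finite θ n).toFinset with hA'
  have hAmem : ∀ u, u ∈ A' ↔ ∃ t, u = itinWord θ t n := by
    intro u; simp [hA', Set.Finite.mem_toFinset, seqFactors]
  set Φ : Finset (List (Fin N)) :=
    A'.biUnion (fun u => (Set.toFinite (extSet θ n u)).toFinset.image (fun j => u ++ [j]))
      with hΦ
  have hset : seqFactors θ (n+1) = ↑Φ := by
    ext w
    simp only [hΦ, Finset.coe_biUnion, Set.mem_iUnion, Finset.mem_coe, Finset.mem_image,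
      Set.Finite.mem_toFinset, seqFactors, Set.mem_setOf_eq]
    constructor
    · rintro ⟨t, rfl⟩
      exact ⟨itinWord θ t n, (hAmem _).mpr ⟨t, rfl⟩, θ (t+n), ⟨t, rfl, rfl⟩,
        (itinWord_succ θ t n).symm⟩
    · rintro ⟨u, hu, j, ⟨t, ht, rfl⟩, rfl⟩
      exact ⟨t, by rw [itinWord_succ, ht]⟩
  have hlenA : ∀ u ∈ A', u.length = n := by
    intro u hu; obtain ⟨t, rfl⟩ := (hAmem u).mp hu; exact itinWord_length θ t n
  rw [seqComplexity, hset, Set.ncard_coe_finset]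
  rw [Finset.card_biUnion]
  · apply Finset.sum_congr rfl
    intro u hu
    rw [Finset.card_image_of_injOn (fun a _ b _ hab => by
      simpa using List.append_cancel_left hab)]
    exact (Set.ncard_eq_toFinset_card _ _).symm
  · intro u hu v hv huv
    simp only [Finset.disjoint_left, Finset.mem_image, Set.Finite.mem_toFinset]
    rintro w ⟨a, _, rfl⟩ ⟨b, _, hw⟩
    have := List.append_inj' hw (by simp)
    exact huv this.1.symm

lemma fiber_count {α : Type*} [DecidableEq α] (A : Finset α) (s : α → ℕ) (N : ℕ)
    (h1 : ∀ u ∈ A, 1 ≤ s u) (h2 : ∀ u ∈ A, s u ≤ N) :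
    ∑ u ∈ A, s u =
      A.card + ∑ k ∈ Finset.Icc 2 N, (k - 1) * (A.filter (fun u => s u = k)).card := by
  classical
  have hmaps : ∀ u ∈ A, s u ∈ Finset.Icc 1 N := fun u hu =>
    Finset.mem_Icc.mpr ⟨h1 u hu, h2 u hu⟩
  have hsum : ∑ u ∈ A, s u =
      ∑ k ∈ Finset.Icc 1 N, k * (A.filter (fun u => s u = k)).card := by
    rw [← Finset.sum_fiberwise_of_maps_to hmaps]
    apply Finset.sum_congr rfl
    intro k _
    rw [Finset.sum_congr rfl (fun u hu => (Finset.mem_filter.mp hu).2),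
      Finset.sum_const, smul_eq_mul, mul_comm]
  have hcard : A.card = ∑ k ∈ Finset.Icc 1 N, (A.filter (fun u => s u = k)).card :=
    Finset.card_eq_sum_card_fiberwise hmaps
  rw [hsum, hcard]
  have htail : ∑ k ∈ Finset.Icc 2 N, (k - 1) * (A.filter (fun u => s u = k)).card =
      ∑ k ∈ Finset.Icc 1 N, (k - 1) * (A.filter (fun u => s u = k)).card := by
    apply Finset.sum_subset
    · intro k hk
      rw [Finset.mem_Icc] at *
      omega
    · intro k hk hk2
      rw [Finset.mem_Icc] at *
      have : k = 1 := by omega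
      simp [this]
  rw [htail]
  have hsplit : ∀ k ∈ Finset.Icc 1 N, k * (A.filter (fun u => s u = k)).card =
      (A.filter (fun u => s u = k)).card + (k - 1) * (A.filter (fun u => s u = k)).card := by
    intro k hk
    have hk1 : 1 ≤ k := (Finset.mem_Icc.mp hk).1
    nth_rewrite 1 [show k = 1 + (k - 1) by omega]
    ring
  rw [Finset.sum_congr rfl hsplit, Finset.sum_add_distrib]

lemma ext_subset_S {X : Type*} [MetricSpace X] (f : X → X) {N : ℕ} (P : Fin N → Set X)
    (x : X) (θ : ℕ → Fin N) (hθ : ∀ t : ℕ, f^[t] x ∈ P (θ t)) (n : ℕ) (u : List (Fin N)) :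
    extSet θ n u ⊆ {j : Fin N | ∃ t : ℕ, f^[t + n] x ∈ pcAtom f P u ∩ P j} := by
  rintro j ⟨t, ht, rfl⟩
  exact ⟨t, by rw [← ht]; exact orbit_mem_atom f P x θ hθ t n, hθ (t + n)⟩

lemma rhs_eq {X : Type*} [MetricSpace X] (f : X → X) {N : ℕ} (P : Fin N → Set X)
    (x : X) (θ : ℕ → Fin N) (hθ : ∀ t : ℕ, f^[t] x ∈ P (θ t)) (n : ℕ) :
    seqComplexity θ n + ∑ k ∈ Finset.Icc 2 N, (k - 1) * (LkSet f P θ x n k).ncard =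
      ∑ u ∈ (seqFactors_finite θ n).toFinset,
        ({j : Fin N | ∃ t : ℕ, f^[t + n] x ∈ pcAtom f P u ∩ P j}).ncard := by
  classical
  set A' := (seqFactors_finite θ n).toFinset with hA'
  set s : List (Fin N) → ℕ :=
    fun u => ({j : Fin N | ∃ t : ℕ, f^[t + n] x ∈ pcAtom f P u ∩ P j}).ncard with hs
  have hs1 : ∀ u ∈ A', 1 ≤ s u := by
    intro u hu
    obtain ⟨t, rfl⟩ := Set.Finite.mem_toFinset _ |>.mp hu
    have hj : θ (t + n) ∈ extSet θ n (itinWord θ t n) := ⟨t, rfl, rfl⟩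
    exact (Set.ncard_pos (Set.toFinite _)).mpr ⟨θ (t + n), ext_subset_S f P x θ hθ n _ hj⟩
  have hsN : ∀ u ∈ A', s u ≤ N := by
    intro u _
    calc s u ≤ (Set.univ : Set (Fin N)).ncard :=
          Set.ncard_le_ncard (Set.subset_univ _) Set.finite_univ
      _ = N := by simp [Set.ncard_univ]
  have hLk : ∀ k, (LkSet f P θ x n k).ncard = (A'.filter (fun u => s u = k)).card := by
    intro k
    have : LkSet f P θ x n k = ↑(A'.filter (fun u => s u = k)) := by
      ext w
      simp [LkSet, hA', Set.Finite.mem_toFinset, hs, seqFactors]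
    rw [this, Set.ncard_coe_finset]
  have hcompl : seqComplexity θ n = A'.card := by
    rw [seqComplexity, hA', Set.ncard_eq_toFinset_card _ (seqFactors_finite θ n)]
  rw [hcompl]
  simp_rw [hLk]
  exact (fiber_count A' s N hs1 hsN).symm

/-- `p(θ,n+1) ≤ p(θ,n) + Σ_{k=2}^N (k−1) #L_n^k(θ)`, with equality under the
separation property. -/
theorem stmt8
    {X : Type*} [MetricSpace X] [CompactSpace X] {N : ℕ} (hN : 2 ≤ N)
    (P : Fin N → Set X) (f : X → X) (lam : ℝ) (hlam : lam ∈ Set.Ioo (0 : ℝ) 1)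
    (hPne : ∀ i, (P i).Nonempty) (hPopen : ∀ i, IsOpen (P i))
    (hPdisj : ∀ i j, i ≠ j → Disjoint (P i) (P j))
    (hcover : (⋃ i, closure (P i)) = Set.univ)
    (hcontr : ∀ i, ∀ x ∈ P i, ∀ y ∈ P i, dist (f x) (f y) ≤ lam * dist x y)
    (x : X) (hxD : ∀ t : ℕ, f^[t] x ∉ pcDelta P)
    (θ : ℕ → Fin N) (hθ : ∀ t : ℕ, f^[t] x ∈ P (θ t)) :
    (∀ n : ℕ, 1 ≤ n →
      seqComplexity θ (n + 1) ≤
        seqComplexity θ n + ∑ k ∈ Finset.Icc 2 N, (k - 1) * (LkSet f P θ x n k).ncard) ∧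
    ((∃ g : Fin N → X → X, ∀ i,
        ContinuousOn (g i) (closure (P i)) ∧ Set.EqOn (g i) f (P i) ∧
        Set.InjOn (g i) (closure (P i)) ∧
        ∀ j, j ≠ i → Disjoint (g i '' closure (P i)) (g j '' closure (P j))) →
      ∀ n : ℕ, 1 ≤ n →
        seqComplexity θ (n + 1) =
          seqComplexity θ n + ∑ k ∈ Finset.Icc 2 N, (k - 1) * (LkSet f P θ x n k).ncard) := by
  constructor
  · intro n _
    rw [complexity_succ θ n, rhs_eq f P x θ hθ n]
    apply Finset.sum_le_sum
    intro u _
    exact Set.ncard_le_ncard (ext_subset_S f P x θ hθ n u) (Set.toFinite _)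
  · rintro ⟨g, hg⟩ n _
    rw [complexity_succ θ n, rhs_eq f P x θ hθ n]
    apply Finset.sum_congr rfl
    intro u hu
    congr 1
    apply Set.Subset.antisymm (ext_subset_S f P x θ hθ n u)
    rintro j ⟨t, hju, hjP⟩
    have hlen : u.length = n := by
      obtain ⟨t', rfl⟩ := (Set.Finite.mem_toFinset _).mp hu
      exact itinWord_length θ t' n
    have hit := sep_itin P f g hg x θ hθ n t u hlen hju
    have hje : θ (t + n) = j := by
      by_contra hne
      exact Set.disjoint_left.mp (hPdisj _ _ hne) (hθ (t + n)) hjP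
    exact ⟨t, hit.symm, hje⟩
end

section
/- Let f be a piecewise contracting interval map with N contraction pieces satisfying the separation property, and θ the itinerary of an orbit of f. Then there exist α ∈ {0,1,…,N−1}, β ≥ 1 and m₀ ≥ 1 such that p(θ,n) = αn + β for all n ≥ m₀; and if α = N−1 then β = 1. -/
open Set

/-- The contraction pieces of a piecewise contracting interval map on `[c 0, c N]`:
`X₁ = [c₀, c₁)`, `Xᵢ = (c_{i-1}, c_i)` for `1 < i < N`, `X_N = (c_{N-1}, c_N]`. -/
def ivlPiece (N : ℕ) (c : ℕ → ℝ) (i : Fin N) : Set ℝ :=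
  if i.val = 0 then Set.Ico (c 0) (c 1)
  else if i.val = N - 1 then Set.Ioc (c (N - 1)) (c N)
  else Set.Ioo (c i.val) (c (i.val + 1))

/-- The atom of a word `w = [i₁, …, iₙ]`:
`A_{i₁…iₙ} = F_{iₙ} ∘ ⋯ ∘ F_{i₁}(X)`, `F_i(A) = closure (f '' (A ∩ X_i))`, `X = [c 0, c N]`. -/
def ivlAtom (N : ℕ) (c : ℕ → ℝ) (f : ℝ → ℝ) (w : List (Fin N)) : Set ℝ :=
  w.foldl (fun A i => closure (f '' (A ∩ ivlPiece N c i))) (Set.Icc (c 0) (c N))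

/-- The discontinuity set `Δ = {c₁, …, c_{N-1}}`. -/
def ivlDelta (N : ℕ) (c : ℕ → ℝ) : Set ℝ :=
  {y | ∃ i : ℕ, 0 < i ∧ i < N ∧ y = c i}

/-- `Δ_lr^n(x)`: the discontinuities `c_i` that are n-left-right visited by the orbit of
`x`: some atom of generation `n` visited by the orbit of `f^n(x)` contains `c_i` and the
orbit enters it on both sides of `c_i`. -/
def ivlDeltaLRn (N : ℕ) (c : ℕ → ℝ) (f : ℝ → ℝ) (n : ℕ) (x : ℝ) : Set ℝ :=
  {y | ∃ i : ℕ, ∃ h1 : 0 < i, ∃ h2 : i < N, y = c i ∧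
    ∃ w : List (Fin N), w.length = n ∧ y ∈ ivlAtom N c f w ∧
      (∃ t : ℕ, f^[t + n] x ∈ ivlAtom N c f w ∩ ivlPiece N c ⟨i - 1, by omega⟩) ∧
      (∃ t : ℕ, f^[t + n] x ∈ ivlAtom N c f w ∩ ivlPiece N c ⟨i, h2⟩)}

/-- `Δ_lr(x)`: the discontinuities that are left-right recurrently visited. -/
def ivlDeltaLR (N : ℕ) (c : ℕ → ℝ) (f : ℝ → ℝ) (x : ℝ) : Set ℝ :=
  {y | ∀ n : ℕ, 1 ≤ n → y ∈ ivlDeltaLRn N c f n x}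

section Aux
variable {N : ℕ} {c : ℕ → ℝ} {f : ℝ → ℝ}

lemma pc_cmono (hc : ∀ i : ℕ, i < N → c i < c (i + 1)) :
    ∀ i j : ℕ, i < j → j ≤ N → c i < c j := by
  intro i j hij hjN
  induction j with
  | zero => omega
  | succ j ih =>
    rcases Nat.lt_or_ge i j with h | h
    · exact lt_trans (ih h (by omega)) (hc j (by omega))
    · have : i = j := by omega
      subst this; exact hc i (by omega)

lemma pc_cmono_le (hc : ∀ i : ℕ, i < N → c i < c (i + 1)) :
    ∀ i j : ℕ, i ≤ j → j ≤ N → c i ≤ c j := by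
  intro i j hij hjN
  rcases Nat.lt_or_ge i j with h | h
  · exact (pc_cmono hc i j h hjN).le
  · have : i = j := by omega
    simp [this]

lemma pc_piece_lt (hN : 2 ≤ N) (hc : ∀ i : ℕ, i < N → c i < c (i + 1)) (i : Fin N) {y : ℝ}
    (hy : y ∈ ivlPiece N c i) {m : ℕ} (him : i.val < m) (hm : m < N) : y < c m := by
  unfold ivlPiece at hy
  split_ifs at hy with h0 h1
  · exact lt_of_lt_of_le hy.2 (pc_cmono_le hc 1 m (by omega) (by omega))
  · omega
  · exact lt_of_lt_of_le hy.2 (pc_cmono_le hc (i.val + 1) m (by omega) (by omega))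

lemma pc_lt_piece (hN : 2 ≤ N) (hc : ∀ i : ℕ, i < N → c i < c (i + 1)) (i : Fin N) {y : ℝ}
    (hy : y ∈ ivlPiece N c i) {m : ℕ} (hm1 : 1 ≤ m) (hmi : m ≤ i.val) : c m < y := by
  unfold ivlPiece at hy
  split_ifs at hy with h0 h1
  · omega
  · exact lt_of_le_of_lt (pc_cmono_le hc m (N - 1) (by omega) (by omega)) hy.1
  · exact lt_of_le_of_lt (pc_cmono_le hc m i.val hmi (by omega)) hy.1

lemma pc_piece_sub (hN : 2 ≤ N) (hc : ∀ i : ℕ, i < N → c i < c (i + 1)) (i : Fin N) :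
    ivlPiece N c i ⊆ Set.Icc (c 0) (c N) := by
  intro y hy
  unfold ivlPiece at hy
  split_ifs at hy with h0 h1
  · exact ⟨hy.1, le_trans hy.2.le (pc_cmono_le hc 1 N (by omega) le_rfl)⟩
  · exact ⟨le_trans (pc_cmono_le hc 0 (N-1) (by omega) (by omega)) hy.1.le, hy.2⟩
  · exact ⟨le_trans (pc_cmono_le hc 0 i.val (by omega) (by omega)) hy.1.le,
      le_trans hy.2.le (pc_cmono_le hc (i.val + 1) N (by omega) le_rfl)⟩

lemma pc_piece_ordconn (i : Fin N) : OrdConnected (ivlPiece N c i) := by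
  unfold ivlPiece
  split_ifs
  · exact ordConnected_Ico
  · exact ordConnected_Ioc
  · exact ordConnected_Ioo

lemma pc_atom_concat (w : List (Fin N)) (a : Fin N) :
    ivlAtom N c f (w ++ [a]) = closure (f '' (ivlAtom N c f w ∩ ivlPiece N c a)) := by
  simp [ivlAtom]

lemma pc_atom_nil : ivlAtom N c f [] = Set.Icc (c 0) (c N) := rfl

lemma pc_atom_closed (w : List (Fin N)) : IsClosed (ivlAtom N c f w) := by
  induction w using List.reverseRecOn with
  | nil => exact isClosed_Icc
  | append_singleton w a ih => rw [pc_atom_concat]; exact isClosed_closure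

lemma pc_atom_sub (hmap : Set.MapsTo f (Set.Icc (c 0) (c N)) (Set.Icc (c 0) (c N)))
    (w : List (Fin N)) : ivlAtom N c f w ⊆ Set.Icc (c 0) (c N) := by
  induction w using List.reverseRecOn with
  | nil => exact subset_rfl
  | append_singleton w a ih =>
    rw [pc_atom_concat]
    refine closure_minimal ?_ isClosed_Icc
    rintro y ⟨z, ⟨hzA, _⟩, rfl⟩
    exact hmap (ih hzA)

lemma pc_f_contOn {lam : ℝ} (hlam0 : 0 ≤ lam)
    (hcontr : ∀ i : Fin N, ∀ x ∈ ivlPiece N c i, ∀ y ∈ ivlPiece N c i,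
      |f x - f y| ≤ lam * |x - y|) (i : Fin N) : ContinuousOn f (ivlPiece N c i) := by
  have : LipschitzOnWith ⟨lam, hlam0⟩ f (ivlPiece N c i) := by
    apply LipschitzOnWith.of_dist_le_mul
    intro x hx y hy
    exact (by simpa [Real.dist_eq] using hcontr i x hx y hy : dist (f x) (f y) ≤ lam * dist x y)
  exact this.continuousOn

lemma pc_atom_preconn {lam : ℝ} (hlam0 : 0 ≤ lam)
    (hcontr : ∀ i : Fin N, ∀ x ∈ ivlPiece N c i, ∀ y ∈ ivlPiece N c i,
      |f x - f y| ≤ lam * |x - y|) (w : List (Fin N)) :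
    IsPreconnected (ivlAtom N c f w) := by
  induction w using List.reverseRecOn with
  | nil => exact isPreconnected_Icc
  | append_singleton w a ih =>
    rw [pc_atom_concat]
    apply IsPreconnected.closure
    apply IsPreconnected.image
    · exact (ih.ordConnected.inter (pc_piece_ordconn a)).isPreconnected
    · exact (pc_f_contOn hlam0 hcontr a).mono inter_subset_right

lemma pc_dist_closure {S : Set ℝ} {K : ℝ} (h : ∀ a ∈ S, ∀ b ∈ S, dist a b ≤ K) :
    ∀ y ∈ closure S, ∀ z ∈ closure S, dist y z ≤ K := by
  have h1 : ∀ b ∈ S, ∀ y ∈ closure S, dist y b ≤ K := by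
    intro b hb
    have : closure S ⊆ {y | dist y b ≤ K} :=
      closure_minimal (fun a ha => h a ha b hb)
        (isClosed_le (continuous_id.dist continuous_const) continuous_const)
    exact fun y hy => this hy
  intro y hy z hz
  have : closure S ⊆ {z | dist y z ≤ K} :=
    closure_minimal (fun b hb => h1 b hb y hy)
      (isClosed_le (continuous_const.dist continuous_id) continuous_const)
  exact this hz

lemma pc_atom_dist {lam : ℝ} (hlam0 : 0 ≤ lam)
    (hcontr : ∀ i : Fin N, ∀ x ∈ ivlPiece N c i, ∀ y ∈ ivlPiece N c i,
      |f x - f y| ≤ lam * |x - y|) (w : List (Fin N)) :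
    ∀ y ∈ ivlAtom N c f w, ∀ z ∈ ivlAtom N c f w,
      dist y z ≤ lam ^ w.length * (c N - c 0) := by
  induction w using List.reverseRecOn with
  | nil =>
    intro y hy z hz
    rw [pc_atom_nil] at hy hz
    simp only [List.length_nil, pow_zero, one_mul, Real.dist_eq]
    rw [abs_sub_le_iff]
    constructor <;> [skip; skip] <;>
      · obtain ⟨h1, h2⟩ := hy; obtain ⟨h3, h4⟩ := hz; linarith
  | append_singleton w a ih =>
    rw [pc_atom_concat]
    apply pc_dist_closure
    rintro _ ⟨u, ⟨huA, huP⟩, rfl⟩ _ ⟨v, ⟨hvA, hvP⟩, rfl⟩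
    have h1 : dist (f u) (f v) ≤ lam * dist u v := by
      simpa [Real.dist_eq] using hcontr a u huP v hvP
    have h2 : dist u v ≤ lam ^ w.length * (c N - c 0) := ih u huA v hvA
    calc dist (f u) (f v) ≤ lam * (lam ^ w.length * (c N - c 0)) :=
          le_trans h1 (mul_le_mul_of_nonneg_left h2 hlam0)
      _ = lam ^ (w ++ [a]).length * (c N - c 0) := by
          simp [pow_succ]; ring

end Aux
section Aux2
variable {N : ℕ} {c : ℕ → ℝ} {f : ℝ → ℝ}

lemma pc_atom_disj (hN : 2 ≤ N) (hc : ∀ i : ℕ, i < N → c i < c (i + 1))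
    (g : Fin N → ℝ → ℝ)
    (hg : ∀ i : Fin N,
      ContinuousOn (g i) (closure (ivlPiece N c i)) ∧
      Set.EqOn (g i) f (ivlPiece N c i) ∧
      Set.InjOn (g i) (closure (ivlPiece N c i)) ∧
      ∀ j : Fin N, j ≠ i →
        Disjoint (g i '' closure (ivlPiece N c i)) (g j '' closure (ivlPiece N c j))) :
    ∀ (n : ℕ) (w v : List (Fin N)), w.length = n → v.length = n → w ≠ v →
      Disjoint (ivlAtom N c f w) (ivlAtom N c f v) := by
  have hsub : ∀ (w : List (Fin N)) (a : Fin N),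
      ivlAtom N c f (w ++ [a]) ⊆ g a '' closure (ivlAtom N c f w ∩ ivlPiece N c a) := by
    intro w a
    have hbd : IsCompact (closure (ivlAtom N c f w ∩ ivlPiece N c a)) := by
      apply Bornology.IsBounded.isCompact_closure
      exact (Metric.isBounded_Icc (c 0) (c N)).subset
        (inter_subset_right.trans (pc_piece_sub hN hc a))
    have hclP : closure (ivlAtom N c f w ∩ ivlPiece N c a) ⊆ closure (ivlPiece N c a) :=
      closure_mono inter_subset_right
    have hcont : ContinuousOn (g a) (closure (ivlAtom N c f w ∩ ivlPiece N c a)) :=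
      (hg a).1.mono hclP
    have himg : IsClosed (g a '' closure (ivlAtom N c f w ∩ ivlPiece N c a)) :=
      (hbd.image_of_continuousOn hcont).isClosed
    rw [pc_atom_concat]
    have heq : f '' (ivlAtom N c f w ∩ ivlPiece N c a)
        = g a '' (ivlAtom N c f w ∩ ivlPiece N c a) :=
      Set.image_congr (fun z hz => ((hg a).2.1 hz.2).symm)
    rw [heq]
    exact closure_minimal (Set.image_mono subset_closure) himg
  intro n
  induction n with
  | zero =>
    intro w v hw hv hne
    rw [List.length_eq_zero_iff] at hw hv
    subst hw; subst hv; exact absurd rfl hne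
  | succ n ih =>
    intro w v hw hv hne
    obtain ⟨w₀, a, rfl⟩ := w.eq_nil_or_concat'.resolve_left (by rintro rfl; simp at hw)
    obtain ⟨v₀, b, rfl⟩ := v.eq_nil_or_concat'.resolve_left (by rintro rfl; simp at hv)
    have hw₀ : w₀.length = n := by simpa using hw
    have hv₀ : v₀.length = n := by simpa using hv
    by_cases hab : a = b
    · subst hab
      have hne₀ : w₀ ≠ v₀ := by rintro rfl; exact hne rfl
      have hd := ih w₀ v₀ hw₀ hv₀ hne₀
      apply Disjoint.mono (hsub w₀ a) (hsub v₀ a)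
      have hT1 : closure (ivlAtom N c f w₀ ∩ ivlPiece N c a) ⊆ closure (ivlPiece N c a) :=
        closure_mono inter_subset_right
      have hT2 : closure (ivlAtom N c f v₀ ∩ ivlPiece N c a) ⊆ closure (ivlPiece N c a) :=
        closure_mono inter_subset_right
      have hT1A : closure (ivlAtom N c f w₀ ∩ ivlPiece N c a) ⊆ ivlAtom N c f w₀ :=
        closure_minimal inter_subset_left (pc_atom_closed w₀)
      have hT2A : closure (ivlAtom N c f v₀ ∩ ivlPiece N c a) ⊆ ivlAtom N c f v₀ :=
        closure_minimal inter_subset_left (pc_atom_closed v₀)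
      rw [Set.disjoint_iff_inter_eq_empty, ← (hg a).2.2.1.image_inter hT1 hT2,
        ((hd.mono hT1A hT2A).inter_eq), Set.image_empty]
    · apply Disjoint.mono ((hsub w₀ a).trans (Set.image_mono (closure_mono inter_subset_right)))
        ((hsub v₀ b).trans (Set.image_mono (closure_mono inter_subset_right)))
      exact (hg a).2.2.2 b (Ne.symm hab)

variable {θ : ℕ → Fin N} {x : ℝ}

lemma pc_itinWord_length (θ : ℕ → Fin N) (t n : ℕ) : (itinWord θ t n).length = n := by
  simp [itinWord]

lemma pc_itinWord_succ (θ : ℕ → Fin N) (t n : ℕ) :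
    itinWord θ t (n + 1) = itinWord θ t n ++ [θ (t + n)] := by
  simp [itinWord, List.range_succ]

lemma pc_itinWord_cons (θ : ℕ → Fin N) (t n : ℕ) :
    itinWord θ t (n + 1) = θ t :: itinWord θ (t + 1) n := by
  simp only [itinWord, List.range_succ_eq_map, List.map_cons, List.map_map, Nat.add_zero]
  congr 1
  apply List.map_congr_left
  intro k _
  simp only [Function.comp_apply]
  congr 1
  omega

lemma pc_orbit_X (hmap : Set.MapsTo f (Set.Icc (c 0) (c N)) (Set.Icc (c 0) (c N)))
    (hx : x ∈ Set.Icc (c 0) (c N)) : ∀ t : ℕ, f^[t] x ∈ Set.Icc (c 0) (c N) := by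
  intro t
  induction t with
  | zero => simpa
  | succ t ih => rw [Function.iterate_succ_apply']; exact hmap ih

lemma pc_orbit_atom (hmap : Set.MapsTo f (Set.Icc (c 0) (c N)) (Set.Icc (c 0) (c N)))
    (hx : x ∈ Set.Icc (c 0) (c N)) (hθ : ∀ t : ℕ, f^[t] x ∈ ivlPiece N c (θ t)) :
    ∀ t n : ℕ, f^[t + n] x ∈ ivlAtom N c f (itinWord θ t n) := by
  intro t n
  induction n with
  | zero => simpa [itinWord, pc_atom_nil] using pc_orbit_X hmap hx t
  | succ n ih =>
    rw [pc_itinWord_succ, pc_atom_concat, show t + (n + 1) = (t + n) + 1 by ring,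
      Function.iterate_succ_apply']
    exact subset_closure ⟨f^[t + n] x, ⟨ih, hθ (t + n)⟩, rfl⟩

end Aux2
/-- `a` is a letter that extends the factor `w` (of length `n`) on the right. -/
def pcExt {N : ℕ} (θ : ℕ → Fin N) (n : ℕ) (a : Fin N) (w : List (Fin N)) : Prop :=
  ∃ t : ℕ, itinWord θ t n = w ∧ θ (t + n) = a

/-- The discontinuity index `i` is left-right visited at level `n`. -/
def pcGood {N : ℕ} (θ : ℕ → Fin N) (n : ℕ) (i : ℕ) : Prop :=
  ∃ t t' : ℕ, itinWord θ t n = itinWord θ t' n ∧ (θ (t + n)).val + 1 = i ∧ (θ (t' + n)).val = i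

open Classical in
/-- The minimal extension letter of a factor. -/
noncomputable def pcMinExt {N : ℕ} [NeZero N] (θ : ℕ → Fin N) (n : ℕ) (w : List (Fin N)) :
    Fin N :=
  if h : ∃ a, pcExt θ n a w ∧ ∀ b, pcExt θ n b w → a ≤ b then h.choose else 0

section Aux3
variable {N : ℕ} {c : ℕ → ℝ} {f : ℝ → ℝ} {θ : ℕ → Fin N} {x : ℝ}

lemma pcMinExt_spec [NeZero N] {n : ℕ} {w : List (Fin N)} (hw : w ∈ seqFactors θ n) :
    pcExt θ n (pcMinExt θ n w) w ∧ ∀ b, pcExt θ n b w → pcMinExt θ n w ≤ b := by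
  obtain ⟨t, rfl⟩ := hw
  have h : ∃ a, pcExt θ n a (itinWord θ t n) ∧
      ∀ b, pcExt θ n b (itinWord θ t n) → a ≤ b := by
    obtain ⟨a, ha, hmin⟩ := Set.exists_min_image {a | pcExt θ n a (itinWord θ t n)} id
      (Set.toFinite _) ⟨θ (t + n), t, rfl, rfl⟩
    exact ⟨a, ha, hmin⟩
  rw [pcMinExt, dif_pos h]
  exact h.choose_spec

lemma pc_factors_finite (θ : ℕ → Fin N) (n : ℕ) : (seqFactors θ n).Finite := by
  apply Set.Finite.subset (List.finite_length_eq (Fin N) n)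
  rintro w ⟨t, rfl⟩
  exact pc_itinWord_length θ t n

lemma pc_mem_factors (θ : ℕ → Fin N) (t n : ℕ) : itinWord θ t n ∈ seqFactors θ n := ⟨t, rfl⟩

lemma pc_factors_length {n : ℕ} {w : List (Fin N)} (hw : w ∈ seqFactors θ n) : w.length = n := by
  obtain ⟨t, rfl⟩ := hw; exact pc_itinWord_length θ t n

/-- `c j` belongs to the atom of `w` whenever `w` has extension letters on both sides of `j`. -/
lemma pc_cj_mem_atom (hN : 2 ≤ N) (hc : ∀ i : ℕ, i < N → c i < c (i + 1))
    (hmap : Set.MapsTo f (Set.Icc (c 0) (c N)) (Set.Icc (c 0) (c N)))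
    {lam : ℝ} (hlam0 : 0 ≤ lam)
    (hcontr : ∀ i : Fin N, ∀ x ∈ ivlPiece N c i, ∀ y ∈ ivlPiece N c i,
      |f x - f y| ≤ lam * |x - y|)
    (hx : x ∈ Set.Icc (c 0) (c N)) (hθ : ∀ t : ℕ, f^[t] x ∈ ivlPiece N c (θ t))
    {n j : ℕ} {a b : Fin N} {w : List (Fin N)}
    (ha : pcExt θ n a w) (hb : pcExt θ n b w) (hja : a.val < j) (hjb : j ≤ b.val) :
    c j ∈ ivlAtom N c f w := by
  obtain ⟨t, htw, hta⟩ := ha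
  obtain ⟨t', ht'w, ht'b⟩ := hb
  have hyA : f^[t + n] x ∈ ivlAtom N c f w := htw ▸ pc_orbit_atom hmap hx hθ t n
  have hzA : f^[t' + n] x ∈ ivlAtom N c f w := ht'w ▸ pc_orbit_atom hmap hx hθ t' n
  have hy : f^[t + n] x < c j := by
    apply pc_piece_lt hN hc a (hta ▸ hθ (t + n)) hja
    have := b.isLt; omega
  have hz : c j < f^[t' + n] x := by
    apply pc_lt_piece hN hc b (ht'b ▸ hθ (t' + n)) (by omega) hjb
  have hconn := (pc_atom_preconn hlam0 hcontr w).ordConnected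
  exact hconn.out hyA hzA ⟨hy.le, hz.le⟩

/-- Step inequality (lower bound): `p n + #(good) ≤ p (n+1)`. Purely combinatorial. -/
lemma pc_step_ge [NeZero N] (θ : ℕ → Fin N) (n : ℕ) :
    seqComplexity θ n + {i : ℕ | pcGood θ n i}.ncard ≤ seqComplexity θ (n + 1) := by
  classical
  set D := {i : ℕ | pcGood θ n i} with hD
  have hDfin : D.Finite := by
    apply Set.Finite.subset (Set.finite_Ico 1 N)
    rintro i ⟨t, t', hww, h1, h2⟩
    exact ⟨by omega, h2 ▸ (θ (t' + n)).isLt⟩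
  have hSfin : (seqFactors θ n).Finite := pc_factors_finite θ n
  have hGW : ∀ i : ℕ, ∃ t' : ℕ, pcGood θ n i →
      ((∃ t, itinWord θ t n = itinWord θ t' n ∧ (θ (t + n)).val + 1 = i) ∧
        (θ (t' + n)).val = i) := by
    intro i
    by_cases hi : pcGood θ n i
    · obtain ⟨t, t', h1, h2, h3⟩ := hi
      exact ⟨t', fun _ => ⟨⟨t, h1, h2⟩, h3⟩⟩
    · exact ⟨0, fun h => absurd h hi⟩
  choose gw hgw using hGW
  set φ : (List (Fin N)) ⊕ ℕ → List (Fin N) := Sum.elim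
    (fun w => w ++ [pcMinExt θ n w])
    (fun i => itinWord θ (gw i) (n + 1)) with hφ
  set T : Set ((List (Fin N)) ⊕ ℕ) := Sum.inl '' (seqFactors θ n) ∪ Sum.inr '' D with hT
  have hmaps : Set.MapsTo φ T (seqFactors θ (n + 1)) := by
    rintro u (⟨w, hw, rfl⟩ | ⟨i, hi, rfl⟩)
    · obtain ⟨⟨t₀, ht₀w, ht₀a⟩, -⟩ := pcMinExt_spec (θ := θ) hw
      refine ⟨t₀, ?_⟩
      show w ++ [pcMinExt θ n w] = itinWord θ t₀ (n + 1)
      rw [pc_itinWord_succ, ht₀w, ht₀a]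
    · exact ⟨gw i, rfl⟩
  have hinj : Set.InjOn φ T := by
    rintro u₁ (⟨w₁, hw₁, rfl⟩ | ⟨i₁, hi₁, rfl⟩) u₂ (⟨w₂, hw₂, rfl⟩ | ⟨i₂, hi₂, rfl⟩) he
    · obtain ⟨h1, -⟩ := List.append_inj he
        (by rw [pc_factors_length hw₁, pc_factors_length hw₂])
      rw [h1]
    · exfalso
      have hi₂' : pcGood θ n i₂ := hi₂
      obtain ⟨⟨t, htt, hta⟩, ht'⟩ := hgw i₂ hi₂'
      have he' : w₁ ++ [pcMinExt θ n w₁]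
          = itinWord θ (gw i₂) n ++ [θ (gw i₂ + n)] := by
        rw [← pc_itinWord_succ]; exact he
      obtain ⟨hwe, hae⟩ := List.append_inj he'
        (by rw [pc_factors_length hw₁, pc_itinWord_length])
      have hae' : pcMinExt θ n w₁ = θ (gw i₂ + n) := by simpa using hae
      obtain ⟨-, hmin⟩ := pcMinExt_spec (θ := θ) hw₁
      have hext : pcExt θ n (θ (t + n)) w₁ := ⟨t, by rw [htt, ← hwe], rfl⟩
      have hle : (pcMinExt θ n w₁).val ≤ (θ (t + n)).val := Fin.le_def.mp (hmin _ hext)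
      rw [hae'] at hle
      omega
    · exfalso
      have hi₁' : pcGood θ n i₁ := hi₁
      obtain ⟨⟨t, htt, hta⟩, ht'⟩ := hgw i₁ hi₁'
      have he' : itinWord θ (gw i₁) n ++ [θ (gw i₁ + n)]
          = w₂ ++ [pcMinExt θ n w₂] := by
        rw [← pc_itinWord_succ]; exact he
      obtain ⟨hwe, hae⟩ := List.append_inj he'
        (by rw [pc_factors_length hw₂, pc_itinWord_length])
      have hae' : θ (gw i₁ + n) = pcMinExt θ n w₂ := by simpa using hae
      obtain ⟨-, hmin⟩ := pcMinExt_spec (θ := θ) hw₂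
      have hext : pcExt θ n (θ (t + n)) w₂ := ⟨t, by rw [htt, hwe], rfl⟩
      have hle : (pcMinExt θ n w₂).val ≤ (θ (t + n)).val := Fin.le_def.mp (hmin _ hext)
      rw [← hae'] at hle
      omega
    · have hi₁' : pcGood θ n i₁ := hi₁
      have hi₂' : pcGood θ n i₂ := hi₂
      obtain ⟨-, ht₁⟩ := hgw i₁ hi₁'
      obtain ⟨-, ht₂⟩ := hgw i₂ hi₂'
      have he' : itinWord θ (gw i₁) n ++ [θ (gw i₁ + n)]
          = itinWord θ (gw i₂) n ++ [θ (gw i₂ + n)] := by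
        rw [← pc_itinWord_succ, ← pc_itinWord_succ]; exact he
      obtain ⟨-, hae⟩ := List.append_inj he'
        (by rw [pc_itinWord_length, pc_itinWord_length])
      have : θ (gw i₁ + n) = θ (gw i₂ + n) := by simpa using hae
      have : i₁ = i₂ := by rw [← ht₁, ← ht₂, this]
      rw [this]
  have hdisj : Disjoint (Sum.inl '' (seqFactors θ n) : Set ((List (Fin N)) ⊕ ℕ))
      (Sum.inr '' D) := by
    rw [Set.disjoint_left]
    rintro _ ⟨w, -, rfl⟩ ⟨i, -, h⟩
    simp at h
  have hTcard : T.ncard = seqComplexity θ n + D.ncard := by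
    rw [hT, Set.ncard_union_eq hdisj (hSfin.image _) (hDfin.image _),
      Set.ncard_image_of_injective _ Sum.inl_injective,
      Set.ncard_image_of_injective _ Sum.inr_injective]
    rfl
  calc seqComplexity θ n + D.ncard = T.ncard := hTcard.symm
    _ = (φ '' T).ncard := (Set.ncard_image_of_injOn hinj).symm
    _ ≤ (seqFactors θ (n + 1)).ncard :=
        Set.ncard_le_ncard hmaps.image_subset (pc_factors_finite θ (n + 1))
    _ = seqComplexity θ (n + 1) := rfl

end Aux3
section Aux4
variable {N : ℕ} {c : ℕ → ℝ} {f : ℝ → ℝ} {θ : ℕ → Fin N} {x : ℝ}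

/-- Step inequality (upper bound): `p (n+1) ≤ p n + #target`, provided every
non-minimal extension letter's value lands in `target`. -/
lemma pc_step_le [NeZero N] (hN : 2 ≤ N) (hc : ∀ i : ℕ, i < N → c i < c (i + 1))
    (hmap : Set.MapsTo f (Set.Icc (c 0) (c N)) (Set.Icc (c 0) (c N)))
    {lam : ℝ} (hlam0 : 0 ≤ lam)
    (hcontr : ∀ i : Fin N, ∀ x ∈ ivlPiece N c i, ∀ y ∈ ivlPiece N c i,
      |f x - f y| ≤ lam * |x - y|)
    (g : Fin N → ℝ → ℝ)
    (hg : ∀ i : Fin N,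
      ContinuousOn (g i) (closure (ivlPiece N c i)) ∧
      Set.EqOn (g i) f (ivlPiece N c i) ∧
      Set.InjOn (g i) (closure (ivlPiece N c i)) ∧
      ∀ j : Fin N, j ≠ i →
        Disjoint (g i '' closure (ivlPiece N c i)) (g j '' closure (ivlPiece N c j)))
    (hx : x ∈ Set.Icc (c 0) (c N)) (hθ : ∀ t : ℕ, f^[t] x ∈ ivlPiece N c (θ t))
    (n : ℕ) (target : Set ℕ) (hfin : target.Finite)
    (htarget : ∀ t₀ : ℕ, θ (t₀ + n) ≠ pcMinExt θ n (itinWord θ t₀ n) →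
      (θ (t₀ + n)).val ∈ target) :
    seqComplexity θ (n + 1) ≤ seqComplexity θ n + target.ncard := by
  classical
  have hSfin : (seqFactors θ n).Finite := pc_factors_finite θ n
  set ψ : List (Fin N) → (List (Fin N)) ⊕ ℕ := fun v =>
    if v.getLastD (θ 0) = pcMinExt θ n v.dropLast then Sum.inl v.dropLast
    else Sum.inr (v.getLastD (θ 0)).val with hψ
  have hψv : ∀ t : ℕ, ψ (itinWord θ t (n + 1)) =
      if θ (t + n) = pcMinExt θ n (itinWord θ t n) then Sum.inl (itinWord θ t n)
      else Sum.inr (θ (t + n)).val := by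
    intro t
    have hd : (itinWord θ t (n + 1)).dropLast = itinWord θ t n := by
      rw [pc_itinWord_succ]; simp
    have hl : (itinWord θ t (n + 1)).getLastD (θ 0) = θ (t + n) := by
      rw [pc_itinWord_succ]; simp
    simp only [hψ]
    rw [hd, hl]
  have hmaps : Set.MapsTo ψ (seqFactors θ (n + 1))
      (Sum.inl '' (seqFactors θ n) ∪ Sum.inr '' target) := by
    rintro v ⟨t, rfl⟩
    rw [hψv t]
    by_cases hcase : θ (t + n) = pcMinExt θ n (itinWord θ t n)
    · rw [if_pos hcase]
      exact Or.inl ⟨itinWord θ t n, pc_mem_factors θ t n, rfl⟩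
    · rw [if_neg hcase]
      exact Or.inr ⟨(θ (t + n)).val, htarget t hcase, rfl⟩
  have hinj : Set.InjOn ψ (seqFactors θ (n + 1)) := by
    rintro v₁ ⟨t₁, rfl⟩ v₂ ⟨t₂, rfl⟩ he
    rw [hψv t₁, hψv t₂] at he
    by_cases hc₁ : θ (t₁ + n) = pcMinExt θ n (itinWord θ t₁ n) <;>
      by_cases hc₂ : θ (t₂ + n) = pcMinExt θ n (itinWord θ t₂ n)
    · rw [if_pos hc₁, if_pos hc₂] at he
      have hw : itinWord θ t₁ n = itinWord θ t₂ n := by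
        simpa using he
      rw [pc_itinWord_succ, pc_itinWord_succ, hc₁, hc₂, hw]
    · rw [if_pos hc₁, if_neg hc₂] at he
      exact absurd he (by simp)
    · rw [if_neg hc₁, if_pos hc₂] at he
      exact absurd he (by simp)
    · rw [if_neg hc₁, if_neg hc₂] at he
      have hval : (θ (t₁ + n)).val = (θ (t₂ + n)).val := by simpa using he
      obtain ⟨hm₁, hmin₁⟩ := pcMinExt_spec (θ := θ) (pc_mem_factors θ t₁ n)
      obtain ⟨hm₂, hmin₂⟩ := pcMinExt_spec (θ := θ) (pc_mem_factors θ t₂ n)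
      have hlt₁ : (pcMinExt θ n (itinWord θ t₁ n)).val < (θ (t₁ + n)).val := by
        have hle := hmin₁ _ (⟨t₁, rfl, rfl⟩ : pcExt θ n (θ (t₁ + n)) (itinWord θ t₁ n))
        rw [Fin.le_def] at hle
        rcases lt_or_eq_of_le hle with h | h
        · exact h
        · exact absurd (Fin.val_injective h.symm) hc₁
      have hlt₂ : (pcMinExt θ n (itinWord θ t₂ n)).val < (θ (t₂ + n)).val := by
        have hle := hmin₂ _ (⟨t₂, rfl, rfl⟩ : pcExt θ n (θ (t₂ + n)) (itinWord θ t₂ n))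
        rw [Fin.le_def] at hle
        rcases lt_or_eq_of_le hle with h | h
        · exact h
        · exact absurd (Fin.val_injective h.symm) hc₂
      have hj₁ : c ((θ (t₁ + n)).val) ∈ ivlAtom N c f (itinWord θ t₁ n) :=
        pc_cj_mem_atom hN hc hmap hlam0 hcontr hx hθ hm₁
          (⟨t₁, rfl, rfl⟩ : pcExt θ n (θ (t₁ + n)) (itinWord θ t₁ n)) hlt₁ le_rfl
      have hj₂ : c ((θ (t₁ + n)).val) ∈ ivlAtom N c f (itinWord θ t₂ n) := by
        rw [hval]
        exact pc_cj_mem_atom hN hc hmap hlam0 hcontr hx hθ hm₂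
          (⟨t₂, rfl, rfl⟩ : pcExt θ n (θ (t₂ + n)) (itinWord θ t₂ n)) hlt₂ le_rfl
      have hw : itinWord θ t₁ n = itinWord θ t₂ n := by
        by_contra hne
        exact Set.disjoint_left.mp
          (pc_atom_disj hN hc g hg n _ _ (pc_itinWord_length θ t₁ n)
            (pc_itinWord_length θ t₂ n) hne) hj₁ hj₂
      rw [pc_itinWord_succ, pc_itinWord_succ, hw, Fin.val_injective hval]
  calc seqComplexity θ (n + 1) = ((ψ '' seqFactors θ (n + 1))).ncard :=
        (Set.ncard_image_of_injOn hinj).symm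
    _ ≤ (Sum.inl '' (seqFactors θ n) ∪ Sum.inr '' target).ncard :=
        Set.ncard_le_ncard hmaps.image_subset ((hSfin.image _).union (hfin.image _))
    _ ≤ (Sum.inl '' (seqFactors θ n)).ncard + (Sum.inr '' target).ncard :=
        Set.ncard_union_le _ _
    _ = seqComplexity θ n + target.ncard := by
        rw [Set.ncard_image_of_injective _ Sum.inl_injective,
          Set.ncard_image_of_injective _ Sum.inr_injective]
        rfl

end Aux4

/-- Part 1) of the main theorem: the complexity of any itinerary is eventually affine,
`p(θ,n) = αn + β` with `α ∈ {0, …, N−1}`, `β ≥ 1`, and `β = 1` if `α = N−1`. -/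
theorem stmt12
    (N : ℕ) (hN : 2 ≤ N) (c : ℕ → ℝ) (hc : ∀ i : ℕ, i < N → c i < c (i + 1))
    (f : ℝ → ℝ) (hmap : Set.MapsTo f (Set.Icc (c 0) (c N)) (Set.Icc (c 0) (c N)))
    (lam : ℝ) (hlam : lam ∈ Set.Ioo (0 : ℝ) 1)
    (hcontr : ∀ i : Fin N, ∀ x ∈ ivlPiece N c i, ∀ y ∈ ivlPiece N c i,
      |f x - f y| ≤ lam * |x - y|)
    (hsep : ∃ g : Fin N → ℝ → ℝ, ∀ i : Fin N,
      ContinuousOn (g i) (closure (ivlPiece N c i)) ∧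
      Set.EqOn (g i) f (ivlPiece N c i) ∧
      Set.InjOn (g i) (closure (ivlPiece N c i)) ∧
      ∀ j : Fin N, j ≠ i →
        Disjoint (g i '' closure (ivlPiece N c i)) (g j '' closure (ivlPiece N c j)))
    (x : ℝ) (hx : x ∈ Set.Icc (c 0) (c N))
    (hxD : ∀ t : ℕ, f^[t] x ∉ ivlDelta N c)
    (θ : ℕ → Fin N) (hθ : ∀ t : ℕ, f^[t] x ∈ ivlPiece N c (θ t))
    :
    ∃ α β m₀ : ℕ, α ≤ N - 1 ∧ 1 ≤ β ∧ 1 ≤ m₀ ∧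
      (∀ n : ℕ, m₀ ≤ n → seqComplexity θ n = α * n + β) ∧
      (α = N - 1 → β = 1) := by
  classical
  haveI : NeZero N := ⟨by omega⟩
  obtain ⟨g, hg⟩ := hsep
  have hlam0 : (0:ℝ) ≤ lam := hlam.1.le
  -- minimal gap between consecutive discontinuities
  obtain ⟨δ, hδ0, hδle⟩ : ∃ δ : ℝ, 0 < δ ∧ ∀ k : ℕ, k < N → δ ≤ c (k + 1) - c k := by
    refine ⟨(Finset.range N).inf' (Finset.nonempty_range_iff.mpr (by omega))
      (fun k => c (k + 1) - c k), ?_, ?_⟩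
    · rw [Finset.lt_inf'_iff]
      intro k hk
      have := hc k (Finset.mem_range.mp hk)
      linarith
    · intro k hk
      exact Finset.inf'_le _ (Finset.mem_range.mpr hk)
  have hL0 : (0:ℝ) < c N - c 0 := by
    have := pc_cmono hc 0 N (by omega) le_rfl
    linarith
  obtain ⟨n₁, hn₁⟩ : ∃ n₁ : ℕ, lam ^ n₁ * (c N - c 0) < δ := by
    obtain ⟨n₁, h⟩ := exists_pow_lt_of_lt_one (div_pos hδ0 hL0) hlam.2
    exact ⟨n₁, (lt_div_iff₀ hL0).mp h⟩
  -- at levels ≥ n₁, extension letters of a common factor are adjacent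
  have hsmall : ∀ n, n₁ ≤ n → ∀ (a b : Fin N) (w : List (Fin N)),
      pcExt θ n a w → pcExt θ n b w → ¬ (a.val + 1 < b.val) := by
    intro n hn a b w ha hb hab
    obtain ⟨t, htw, hta⟩ := ha
    obtain ⟨t', ht'w, ht'b⟩ := hb
    have hbN := b.isLt
    have hyA : f^[t + n] x ∈ ivlAtom N c f w := htw ▸ pc_orbit_atom hmap hx hθ t n
    have hzA : f^[t' + n] x ∈ ivlAtom N c f w := ht'w ▸ pc_orbit_atom hmap hx hθ t' n
    have hy : f^[t + n] x < c (a.val + 1) :=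
      pc_piece_lt hN hc a (hta ▸ hθ (t + n)) (by omega) (by omega)
    have hz : c b.val < f^[t' + n] x :=
      pc_lt_piece hN hc b (ht'b ▸ hθ (t' + n)) (by omega) le_rfl
    have hcc : c (a.val + 1) + δ ≤ c b.val := by
      have h1 := hδle (a.val + 1) (by omega)
      have h2 := pc_cmono_le hc (a.val + 2) b.val (by omega) (by omega)
      linarith
    have hd := pc_atom_dist hlam0 hcontr w _ hyA _ hzA
    rw [pc_factors_length (⟨t, htw.symm⟩ : w ∈ seqFactors θ n)] at hd
    have hd2 : lam ^ n * (c N - c 0) ≤ lam ^ n₁ * (c N - c 0) :=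
      mul_le_mul_of_nonneg_right (pow_le_pow_of_le_one hlam0 hlam.2.le hn) hL0.le
    rw [Real.dist_eq] at hd
    have habs : f^[t' + n] x - f^[t + n] x ≤ |f^[t + n] x - f^[t' + n] x| := by
      rw [abs_sub_comm]
      exact le_abs_self _
    linarith
  -- the sets of left-right visited discontinuities
  have hDsub : ∀ n : ℕ, {i : ℕ | pcGood θ n i} ⊆ Set.Ico 1 N := by
    rintro n i ⟨t, t', hww, h1, h2⟩
    exact ⟨by omega, h2 ▸ (θ (t' + n)).isLt⟩
  have hDfin : ∀ n : ℕ, {i : ℕ | pcGood θ n i}.Finite :=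
    fun n => (Set.finite_Ico 1 N).subset (hDsub n)
  have hDmono : ∀ n : ℕ, {i : ℕ | pcGood θ (n + 1) i} ⊆ {i : ℕ | pcGood θ n i} := by
    rintro n i ⟨t, t', hww, h1, h2⟩
    refine ⟨t + 1, t' + 1, ?_, ?_, ?_⟩
    · rw [pc_itinWord_cons θ t n, pc_itinWord_cons θ t' n] at hww
      injection hww with h htail
    · show (θ (t + 1 + n)).val + 1 = i
      rw [show t + 1 + n = t + (n + 1) by ring]
      exact h1
    · show (θ (t' + 1 + n)).val = i
      rw [show t' + 1 + n = t' + (n + 1) by ring]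
      exact h2
  set aa : ℕ → ℕ := fun n => {i : ℕ | pcGood θ n i}.ncard with haa
  have haastep : ∀ n, aa (n + 1) ≤ aa n :=
    fun n => Set.ncard_le_ncard (hDmono n) (hDfin n)
  have haamono : ∀ m n : ℕ, m ≤ n → aa n ≤ aa m := by
    intro m n h
    induction n, h using Nat.le_induction with
    | base => exact le_rfl
    | succ n hn ih => exact le_trans (haastep n) ih
  set α := sInf (Set.range aa) with hα
  obtain ⟨M, hM⟩ : ∃ M, aa M = α := Nat.sInf_mem (Set.range_nonempty aa)
  have hαle : ∀ n, α ≤ aa n := fun n => Nat.sInf_le ⟨n, rfl⟩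
  have hαeq : ∀ n, M ≤ n → aa n = α := fun n h => le_antisymm (hM ▸ haamono M n h) (hαle n)
  have hIco : (Set.Ico 1 N).ncard = N - 1 := by
    rw [← Finset.coe_Ico, Set.ncard_coe_finset, Nat.card_Ico]
  -- step inequalities
  have key1 : ∀ n, seqComplexity θ n + aa n ≤ seqComplexity θ (n + 1) :=
    fun n => pc_step_ge θ n
  have keylt : ∀ (n : ℕ) (t₀ : ℕ), θ (t₀ + n) ≠ pcMinExt θ n (itinWord θ t₀ n) →
      (pcMinExt θ n (itinWord θ t₀ n)).val < (θ (t₀ + n)).val := by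
    intro n t₀ hne
    obtain ⟨hm, hmin⟩ := pcMinExt_spec (θ := θ) (pc_mem_factors θ t₀ n)
    have hle := hmin _ (⟨t₀, rfl, rfl⟩ : pcExt θ n (θ (t₀ + n)) (itinWord θ t₀ n))
    rw [Fin.le_def] at hle
    rcases lt_or_eq_of_le hle with h | h
    · exact h
    · exact absurd (Fin.val_injective h.symm) hne
  have key2 : ∀ n, n₁ ≤ n →
      seqComplexity θ (n + 1) ≤ seqComplexity θ n + aa n := by
    intro n hn
    apply pc_step_le hN hc hmap hlam0 hcontr g hg hx hθ n _ (hDfin n)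
    intro t₀ hne
    have hlt := keylt n t₀ hne
    obtain ⟨hm, hmin⟩ := pcMinExt_spec (θ := θ) (pc_mem_factors θ t₀ n)
    have hnlt := hsmall n hn _ _ _ hm
      (⟨t₀, rfl, rfl⟩ : pcExt θ n (θ (t₀ + n)) (itinWord θ t₀ n))
    obtain ⟨tm, htmw, htma⟩ := hm
    refine ⟨tm, t₀, htmw, ?_, rfl⟩
    rw [htma]
    omega
  have key3 : ∀ n, seqComplexity θ (n + 1) ≤ seqComplexity θ n + (N - 1) := by
    intro n
    have h := pc_step_le hN hc hmap hlam0 hcontr g hg hx hθ n (Set.Ico 1 N)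
      (Set.finite_Ico 1 N) ?_
    · rwa [hIco] at h
    · intro t₀ hne
      have hlt := keylt n t₀ hne
      exact ⟨by omega, (θ (t₀ + n)).isLt⟩
  -- complexity at level 0
  have hp0 : seqComplexity θ 0 = 1 := by
    have h : seqFactors θ 0 = {([] : List (Fin N))} := by
      ext w
      simp [seqFactors, itinWord]
    rw [seqComplexity, h, Set.ncard_singleton]
  have hlow : ∀ n, 1 + α * n ≤ seqComplexity θ n := by
    intro n
    induction n with
    | zero => simp [hp0]
    | succ n ih =>
      have h1 := key1 n
      have h2 := hαle n
      have h3 : α * (n + 1) = α * n + α := by ring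
      omega
  have hupp : ∀ n, seqComplexity θ n ≤ 1 + (N - 1) * n := by
    intro n
    induction n with
    | zero => simp [hp0]
    | succ n ih =>
      have h1 := key3 n
      have h3 : (N - 1) * (n + 1) = (N - 1) * n + (N - 1) := by ring
      omega
  set m₀ := max 1 (max n₁ M) with hm₀
  have hstep : ∀ n, m₀ ≤ n → seqComplexity θ (n + 1) = seqComplexity θ n + α := by
    intro n hn
    have hn₁' : n₁ ≤ n := le_trans (le_trans (le_max_left n₁ M) (le_max_right 1 _)) hn
    have hM' : M ≤ n := le_trans (le_trans (le_max_right n₁ M) (le_max_right 1 _)) hn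
    have h1 := key1 n
    have h2 := key2 n hn₁'
    have h3 := hαeq n hM'
    omega
  refine ⟨α, seqComplexity θ m₀ - α * m₀, m₀, ?_, ?_, ?_, ?_, ?_⟩
  · rw [← hM]
    have h := Set.ncard_le_ncard (hDsub M) (Set.finite_Ico 1 N)
    rwa [hIco] at h
  · have := hlow m₀
    omega
  · exact le_max_left 1 _
  · intro n hn
    induction n, hn using Nat.le_induction with
    | base =>
      have := hlow m₀
      omega
    | succ n hn ih =>
      have h1 := hstep n hn
      have h2 : α * (n + 1) = α * n + α := by ring
      omega
  · intro hα1
    have h1 := hupp m₀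
    have h2 := hlow m₀
    have h3 : α * m₀ = (N - 1) * m₀ := by rw [hα1]
    omega
end
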